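/- arXiv:1404.5904 — 4 statements merged into one kernel-verified Lean document; each statement's English description precedes it below -/
import Mathlib

section
/- For the sequence M_n = n!/(n+1)^2, there exists a constant C > 0 (depending only on the dimension d) such that for every multi-index α ∈ ℕ^d, the sum over all multi-indices β < α of binom(α,β) · M_{|α−β|} · M_{|β|+1} is at most C · |α| · M_{|α|}. -/
/-!
Grouping the multi-indices `β ≤ α` by `k = |β|`, the multivariate Vandermonde identity
`∑_{|β| = k} binom(α,β) = binom(|α|,k)` reduces the sum to its one-dimensional case
`∑_{k<n} binom(n,k) M_{n-k} M_{k+1}` with `n = |α|`. Its `k`-th term is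
`n! (k+1) / (a² b²)` with `a = n-k+1`, `b = k+2`; since `a + b = n + 3`,
`1/(a²b²) ≤ 2/(n+3)² (1/a² + 1/b²)`, and the two resulting sums are each at most `n`
(the first because `∑ 1/m² ≤ 1` over `m ≥ 2`). This gives the constant `C = 4`.
-/

open Finset Polynomial

noncomputable def Mseq (n : ℕ) : ℝ := (n.factorial : ℝ) / ((n : ℝ) + 1) ^ 2

theorem X_add_one_pow_eq_sum (R : Type*) [CommSemiring R] (a : ℕ) :
    (X + 1 : R[X]) ^ a = ∑ b ∈ Iic a, C (a.choose b : R) * X ^ b := by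
  ext m
  simp only [coeff_X_add_one_pow, finsetSum_coeff, coeff_C_mul_X_pow, sum_ite_eq, mem_Iic]
  split_ifs with h
  · rfl
  · rw [Nat.choose_eq_zero_of_lt (by omega), Nat.cast_zero]

theorem sum_prod_choose_eq_choose_sum {ι : Type*} [Fintype ι] [DecidableEq ι] (α : ι → ℕ)
    (k : ℕ) : ∑ β ∈ Iic α with ∑ i, β i = k, ∏ i, (α i).choose (β i) = (∑ i, α i).choose k := by
  have h : (X + 1 : ℕ[X]) ^ (∑ i, α i)
      = ∑ β ∈ Iic α, C (∏ i, (α i).choose (β i)) * X ^ (∑ i, β i) := by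
    rw [← prod_pow_eq_pow_sum]
    simp_rw [X_add_one_pow_eq_sum, prod_univ_sum, prod_mul_distrib, prod_pow_eq_pow_sum,
      ← map_prod]
    rfl
  have := congrArg (coeff · k) h
  simp only [coeff_X_add_one_pow, finsetSum_coeff, coeff_C_mul_X_pow, Nat.cast_id] at this
  rw [sum_filter, this]
  simp_rw [eq_comm]

theorem sum_Iio_prod_choose_mul_eq {ι R : Type*} [Fintype ι] [DecidableEq ι] [Semiring R]
    (α : ι → ℕ) (f : ℕ → ℕ → R) :
    ∑ β ∈ Iio α, ((∏ i, (α i).choose (β i) : ℕ) : R) * f (∑ i, (α i - β i)) (∑ i, β i)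
      = ∑ k ∈ range (∑ i, α i), ((∑ i, α i).choose k : R) * f (∑ i, α i - k) k := by
  rw [← sum_fiberwise_of_maps_to (g := fun β : ι → ℕ => ∑ i, β i)
    fun β hβ => mem_range.2 (Fintype.sum_strictMono (mem_Iio.1 hβ))]
  refine sum_congr rfl fun k hk => ?_
  have hfiber : {β ∈ Iio α | ∑ i, β i = k} = {β ∈ Iic α | ∑ i, β i = k} := by
    rw [← Iic_erase, filter_erase, erase_eq_of_notMem]
    simpa using (mem_range.1 hk).ne'
  calc ∑ β ∈ Iio α with ∑ i, β i = k,
        ((∏ i, (α i).choose (β i) : ℕ) : R) * f (∑ i, (α i - β i)) (∑ i, β i)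
      = ∑ β ∈ Iic α with ∑ i, β i = k,
        ((∏ i, (α i).choose (β i) : ℕ) : R) * f (∑ i, α i - k) k := by
        rw [hfiber]
        refine sum_congr rfl fun β hβ => ?_
        obtain ⟨hβα, rfl⟩ := mem_filter.1 hβ
        rw [sum_tsub_distrib _ fun i _ => mem_Iic.1 hβα i]
    _ = ((∑ i, α i).choose k : R) * f (∑ i, α i - k) k := by
        rw [← sum_mul, ← Nat.cast_sum, sum_prod_choose_eq_choose_sum]

theorem one_div_sq_mul_sq_le {a b : ℝ} (ha : 0 < a) (hb : 0 < b) :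
    1 / (a ^ 2 * b ^ 2) ≤ 2 / (a + b) ^ 2 * (1 / a ^ 2 + 1 / b ^ 2) := by
  rw [div_add_div _ _ (by positivity) (by positivity), div_mul_div_comm,
    div_le_div_iff₀ (by positivity) (by positivity)]
  nlinarith [sq_nonneg (a - b), mul_pos ha hb, pow_pos (mul_pos ha hb) 2]

theorem choose_mul_Mseq_mul_Mseq {n k : ℕ} (hk : k ≤ n) :
    n.choose k * (Mseq (n - k) * Mseq (k + 1))
      = n.factorial * (k + 1) / ((((n - k : ℕ) : ℝ) + 1) ^ 2 * ((k : ℝ) + 2) ^ 2) := by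
  have hfact : (n.choose k : ℝ) * k.factorial * (n - k).factorial = n.factorial := by
    exact_mod_cast Nat.choose_mul_factorial_mul_factorial hk
  rw [← hfact, Mseq, Mseq, Nat.factorial_succ]
  push_cast
  field_simp
  ring

theorem choose_mul_Mseq_mul_Mseq_le {n k : ℕ} (hk : k ≤ n) :
    n.choose k * (Mseq (n - k) * Mseq (k + 1))
      ≤ 2 * n.factorial / ((n : ℝ) + 3) ^ 2
          * ((k + 1) / (((n - k : ℕ) : ℝ) + 1) ^ 2 + (k + 1) / ((k : ℝ) + 2) ^ 2) := by
  have hsum : (((n - k : ℕ) : ℝ) + 1) + ((k : ℝ) + 2) = n + 3 := by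
    rw [Nat.cast_sub hk]; ring
  have h := one_div_sq_mul_sq_le (a := ((n - k : ℕ) : ℝ) + 1) (b := (k : ℝ) + 2)
    (by positivity) (by positivity)
  rw [hsum] at h
  rw [choose_mul_Mseq_mul_Mseq hk]
  calc (n.factorial : ℝ) * (k + 1) / ((((n - k : ℕ) : ℝ) + 1) ^ 2 * ((k : ℝ) + 2) ^ 2)
      = n.factorial * (k + 1) * (1 / ((((n - k : ℕ) : ℝ) + 1) ^ 2 * ((k : ℝ) + 2) ^ 2)) := by
        ring
    _ ≤ n.factorial * (k + 1) * (2 / ((n : ℝ) + 3) ^ 2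
          * (1 / (((n - k : ℕ) : ℝ) + 1) ^ 2 + 1 / ((k : ℝ) + 2) ^ 2)) := by gcongr
    _ = _ := by ring

theorem sum_range_one_div_sub_add_one_sq_le (n : ℕ) :
    ∑ k ∈ range n, 1 / (((n - k : ℕ) : ℝ) + 1) ^ 2 ≤ 1 := by
  have hreflect : ∑ k ∈ range n, 1 / (((n - k : ℕ) : ℝ) + 1) ^ 2
      = ∑ j ∈ range n, 1 / ((j + 2 : ℕ) : ℝ) ^ 2 := by
    rw [← sum_range_reflect]
    refine sum_congr rfl fun j hj => ?_
    rw [show n - (n - 1 - j) = j + 1 by have := mem_range.1 hj; omega]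
    push_cast; ring
  calc ∑ k ∈ range n, 1 / (((n - k : ℕ) : ℝ) + 1) ^ 2
      = ∑ i ∈ Ioo 1 (n + 2), ((i : ℝ) ^ 2)⁻¹ := by
        rw [hreflect, ← Ico_add_one_left_eq_Ioo, sum_Ico_eq_sum_range]
        simp [add_comm]
    _ ≤ 2 / ((1 : ℕ) + 1) := sum_Ioo_inv_sq_le 1 (n + 2)
    _ = 1 := by norm_num

theorem sum_choose_mul_Mseq_mul_Mseq_le (n : ℕ) :
    ∑ k ∈ range n, n.choose k * (Mseq (n - k) * Mseq (k + 1)) ≤ 4 * n * Mseq n := by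
  have hA : ∑ k ∈ range n, ((k : ℝ) + 1) / (((n - k : ℕ) : ℝ) + 1) ^ 2 ≤ (n : ℝ) :=
    calc ∑ k ∈ range n, ((k : ℝ) + 1) / (((n - k : ℕ) : ℝ) + 1) ^ 2
        ≤ ∑ k ∈ range n, (n : ℝ) * (1 / (((n - k : ℕ) : ℝ) + 1) ^ 2) := by
          refine sum_le_sum fun k hk => ?_
          rw [mul_one_div]
          gcongr
          exact_mod_cast mem_range.1 hk
      _ ≤ (n : ℝ) * 1 := by
          rw [← mul_sum]; gcongr; exact sum_range_one_div_sub_add_one_sq_le n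
      _ = n := mul_one _
  have hB : ∑ k ∈ range n, ((k : ℝ) + 1) / ((k : ℝ) + 2) ^ 2 ≤ (n : ℝ) :=
    calc ∑ k ∈ range n, ((k : ℝ) + 1) / ((k : ℝ) + 2) ^ 2 ≤ ∑ k ∈ range n, (1 : ℝ) := by
          refine sum_le_sum fun k _ => ?_
          rw [div_le_one (by positivity)]
          nlinarith
      _ = n := by simp
  calc ∑ k ∈ range n, n.choose k * (Mseq (n - k) * Mseq (k + 1))
      ≤ ∑ k ∈ range n, 2 * n.factorial / ((n : ℝ) + 3) ^ 2
          * ((k + 1) / (((n - k : ℕ) : ℝ) + 1) ^ 2 + (k + 1) / ((k : ℝ) + 2) ^ 2) :=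
        sum_le_sum fun k hk => choose_mul_Mseq_mul_Mseq_le (mem_range.1 hk).le
    _ ≤ 2 * n.factorial / ((n : ℝ) + 3) ^ 2 * (n + n) := by
        rw [← mul_sum, sum_add_distrib]
        gcongr
    _ = 4 * n * (n.factorial / ((n : ℝ) + 3) ^ 2) := by ring
    _ ≤ 4 * n * Mseq n := by
        unfold Mseq
        gcongr
        linarith

/-- For every dimension `d` there is `C > 0` such that for every multi-index
`α ∈ ℕ^d`, `∑_{β < α} binom(α,β) M_{|α-β|} M_{|β|+1} ≤ C |α| M_{|α|}`. -/
theorem stmt0 (d : ℕ) :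
    ∃ C : ℝ, 0 < C ∧ ∀ α : Fin d → ℕ,
      ∑ β ∈ (Finset.Iic α).erase α,
          ((∏ i, (α i).choose (β i) : ℕ) : ℝ) * Mseq (∑ i, (α i - β i)) * Mseq ((∑ i, β i) + 1)
        ≤ C * (∑ i, α i : ℕ) * Mseq (∑ i, α i) := by
  refine ⟨4, by norm_num, fun α => ?_⟩
  simp_rw [Iic_erase, mul_assoc]
  rw [sum_Iio_prod_choose_mul_eq α fun m k => Mseq m * Mseq (k + 1)]
  simpa only [mul_assoc] using sum_choose_mul_Mseq_mul_Mseq_le _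
end

section
/- For the sequence M_n = n!/(n+1)^2 in one variable, there is a constant C > 0 such that for all n ≥ 1, the sum over 1 ≤ j ≤ n−1 of binom(n,j) · M_{n−j} · M_{j+1} is at most C · n · M_n. -/
/-!
The `j`-th term equals `n! (j+1) / (a² b²)` with `a = n - j + 1`, `b = j + 2`, hence is at most
`n! / (a² b)`. Since `a + b = n + 3`, the partial fraction identity
`(a + b) / (a² b) = 1 / a² + 1 / (a b)` together with `1 / (a b) ≤ 1 / a² + 1 / b²` bounds it
by `n! (2 / a² + 1 / b²) / (n + 3)`, and the series `∑ 1 / k²` converges, so the whole sum is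
`O(n! / n) = O(n M_n)`.
-/

open Finset
open scoped Nat

lemma Nat.choose_mul_factorial_mul_factorial_succ {n j : ℕ} (h : j ≤ n) :
    n.choose j * (n - j)! * (j + 1)! = n ! * (j + 1) := by
  rw [Nat.factorial_succ, ← Nat.choose_mul_factorial_mul_factorial h]
  ring

lemma choose_mul_Mseq_sub_mul_Mseq_succ {n j : ℕ} (h : j ≤ n) :
    (n.choose j : ℝ) * Mseq (n - j) * Mseq (j + 1)
      = n ! * (j + 1) / ((((n - j : ℕ) : ℝ) + 1) ^ 2 * ((j : ℝ) + 2) ^ 2) := by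
  have key : (n.choose j : ℝ) * (n - j)! * (j + 1)! = n ! * (j + 1) := by
    exact_mod_cast Nat.choose_mul_factorial_mul_factorial_succ h
  rw [← key, Mseq, Mseq]
  push_cast
  field_simp
  ring

lemma one_div_sq_mul_le {a b : ℝ} (ha : 0 < a) (hb : 0 < b) :
    1 / (a ^ 2 * b) ≤ (2 / a ^ 2 + 1 / b ^ 2) / (a + b) := by
  rw [div_le_div_iff₀ (by positivity) (by positivity)]
  field_simp
  nlinarith [sq_nonneg (a - b), mul_pos ha hb]

lemma choose_mul_Mseq_sub_mul_Mseq_succ_le {n j : ℕ} (h : j ≤ n) :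
    (n.choose j : ℝ) * Mseq (n - j) * Mseq (j + 1)
      ≤ n ! / (n + 3) * (2 / (((n - j : ℕ) : ℝ) + 1) ^ 2 + 1 / ((j : ℝ) + 1) ^ 2) := by
  set a : ℝ := ((n - j : ℕ) : ℝ) + 1
  have ha : 0 < a := by positivity
  have hab : a + ((j : ℝ) + 2) = n + 3 := by
    simp only [a, Nat.cast_sub h]; ring
  rw [choose_mul_Mseq_sub_mul_Mseq_succ h]
  calc (n ! : ℝ) * (j + 1) / (a ^ 2 * ((j : ℝ) + 2) ^ 2)
      ≤ n ! * (1 / (a ^ 2 * ((j : ℝ) + 2))) := by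
        rw [mul_div_assoc]
        refine mul_le_mul_of_nonneg_left ?_ (by positivity)
        rw [div_le_div_iff₀ (by positivity) (by positivity)]
        nlinarith [sq_nonneg a]
    _ ≤ n ! * ((2 / a ^ 2 + 1 / ((j : ℝ) + 2) ^ 2) / (n + 3)) := by
        rw [← hab]
        exact mul_le_mul_of_nonneg_left (one_div_sq_mul_le ha (by positivity)) (by positivity)
    _ ≤ n ! / (n + 3) * (2 / a ^ 2 + 1 / ((j : ℝ) + 1) ^ 2) := by
        rw [mul_div_assoc', div_mul_eq_mul_div]
        gcongr
        linarith

lemma sum_Ico_one_div_succ_sq_le (n : ℕ) : ∑ j ∈ Ico 1 n, 1 / ((j : ℝ) + 1) ^ 2 ≤ 1 := by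
  have := sum_Ioo_inv_sq_le (α := ℝ) 1 (n + 1)
  rw [← Ico_add_one_left_eq_Ioo, ← sum_Ico_add' _ 1 n 1] at this
  norm_num at this ⊢
  exact this

lemma sum_Ico_one_div_sub_succ_sq_le (n : ℕ) :
    ∑ j ∈ Ico 1 n, 1 / (((n - j : ℕ) : ℝ) + 1) ^ 2 ≤ 1 := by
  rw [sum_Ico_reflect (fun k => 1 / ((k : ℝ) + 1) ^ 2) 1 (Nat.le_succ n)]
  simpa using sum_Ico_one_div_succ_sq_le n

lemma one_div_add_three_le_div_add_one_sq {x : ℝ} (hx : 1 ≤ x) :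
    1 / (x + 3) ≤ x / (x + 1) ^ 2 := by
  rw [div_le_div_iff₀ (by positivity) (by positivity)]
  nlinarith

/-- There is `C > 0` such that for all `n ≥ 1`,
`∑_{j=1}^{n-1} binom(n,j) M_{n-j} M_{j+1} ≤ C n M_n`. -/
theorem stmt1 :
    ∃ C : ℝ, 0 < C ∧ ∀ n : ℕ, 1 ≤ n →
      ∑ j ∈ Finset.Ico 1 n, ((n.choose j : ℕ) : ℝ) * Mseq (n - j) * Mseq (j + 1)
        ≤ C * n * Mseq n := by
  refine ⟨3, by norm_num, fun n hn => ?_⟩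
  have hreflect := sum_Ico_one_div_sub_succ_sq_le n
  have hsucc := sum_Ico_one_div_succ_sq_le n
  calc ∑ j ∈ Ico 1 n, ((n.choose j : ℕ) : ℝ) * Mseq (n - j) * Mseq (j + 1)
      ≤ ∑ j ∈ Ico 1 n,
          n ! / (n + 3) * (2 / (((n - j : ℕ) : ℝ) + 1) ^ 2 + 1 / ((j : ℝ) + 1) ^ 2) :=
        sum_le_sum fun j hj => choose_mul_Mseq_sub_mul_Mseq_succ_le (mem_Ico.1 hj).2.le
    _ = n ! / (n + 3) * (2 * ∑ j ∈ Ico 1 n, 1 / (((n - j : ℕ) : ℝ) + 1) ^ 2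
          + ∑ j ∈ Ico 1 n, 1 / ((j : ℝ) + 1) ^ 2) := by
        rw [← mul_sum, sum_add_distrib, mul_sum]
        simp only [mul_one_div]
    _ ≤ n ! / (n + 3) * 3 := by gcongr; linarith
    _ = 3 * n ! * (1 / (n + 3)) := by ring
    _ ≤ 3 * n ! * (n / (n + 1) ^ 2) :=
        mul_le_mul_of_nonneg_left (one_div_add_three_le_div_add_one_sq (Nat.one_le_cast.2 hn))
          (by positivity)
    _ = 3 * n * Mseq n := by rw [Mseq]; ring
end

section
/- Suppose for each integer N ≥ 2 there is a nonnegative continuous function E_N on [0,∞) satisfying E_2(t) ≤ B for all t, and for N ≥ 3: E_N(t) ≤ E_N(0) + ∫₀ᵗ C₀(N−1) h(s) E_N(s) ds + ∫₀ᵗ C N B² A^{N−1} exp(C₀(N−1) H(s)) (1 + C₁ B s)^{N−3} ds, where h ≥ 0 is continuous, H(t) = ∫₀ᵗ h, E_N(0) ≤ B A^{N−1}, A ≥ 1, B > 0, C₁ = 3C, and C₀ ≥ C > 0. Then for every N ≥ 2 and t ≥ 0, E_N(t) ≤ 2 B A^{N−1} exp(C₀(N−1) H(t)) (1 + C₁ B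 t)^{N−2}. -/
/-!
For `N ≥ 3` the hypothesis is a linear Gronwall inequality with rate `C₀ (N - 1) h`, and its
forcing term already carries the integrating factor `exp (C₀ (N - 1) H)`. Gronwall therefore
leaves only `∫₀ᵗ (1 + C₁ B s)^(N-3) ds = ((1 + C₁ B t)^(N-2) - 1) / (C₁ B (N - 2))`,
whose coefficient `C N B² A^(N-1) / (3 C B (N - 2))` is at most `B A^(N-1)` because
`N ≤ 3 (N - 2)`. Together with `E_N(0) ≤ B A^(N-1)` this gives the bound, even without the
factor `2`.
-/

open intervalIntegral Real

theorem le_mul_exp_integral_of_le_add_integral {a f u : ℝ → ℝ} {c : ℝ} (ha : Continuous a)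
    (ha0 : ∀ t, 0 ≤ t → 0 ≤ a t) (hf : Continuous f) (hu : Continuous u)
    (hle : ∀ t, 0 ≤ t → u t ≤ c + (∫ s in (0 : ℝ)..t, a s * u s) +
      ∫ s in (0 : ℝ)..t, exp (∫ r in (0 : ℝ)..s, a r) * f s) :
    ∀ t, 0 ≤ t →
      u t ≤ (c + ∫ s in (0 : ℝ)..t, f s) * exp (∫ s in (0 : ℝ)..t, a s) := by
  set A : ℝ → ℝ := fun x => ∫ s in (0 : ℝ)..x, a s
  set φ : ℝ → ℝ := fun x => c + (∫ s in (0 : ℝ)..x, a s * u s) +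
    ∫ s in (0 : ℝ)..x, exp (A s) * f s
  have hA : ∀ t, HasDerivAt A (a t) t := fun t => (ha.integral_hasStrictDerivAt 0 t).hasDerivAt
  have hAc : Continuous A := continuous_iff_continuousAt.2 fun t => (hA t).continuousAt
  have hφ : ∀ t, HasDerivAt φ (a t * u t + exp (A t) * f t) t := fun t =>
    (((ha.mul hu).integral_hasStrictDerivAt 0 t).hasDerivAt.const_add c).add
      (((continuous_exp.comp hAc).mul hf).integral_hasStrictDerivAt 0 t).hasDerivAt
  set ψ : ℝ → ℝ := fun x => φ x * exp (-A x) - ∫ s in (0 : ℝ)..x, f s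
  have hψ : ∀ t, HasDerivAt ψ (a t * exp (-A t) * (u t - φ t)) t := by
    intro t
    refine (((hφ t).mul (hA t).neg.exp).sub
      (hf.integral_hasStrictDerivAt 0 t).hasDerivAt).congr_deriv ?_
    have hexp : exp (A t) * exp (-A t) = 1 := by rw [← exp_add, add_neg_cancel, exp_zero]
    linear_combination f t * hexp
  have hanti : AntitoneOn ψ (Set.Ici 0) := by
    refine antitoneOn_of_hasDerivWithinAt_nonpos (convex_Ici 0)
      (fun t _ => (hψ t).continuousAt.continuousWithinAt) (fun t _ => (hψ t).hasDerivWithinAt) ?_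
    intro t ht
    rw [interior_Ici] at ht
    exact mul_nonpos_of_nonneg_of_nonpos (by have := ha0 t ht.le; positivity)
      (sub_nonpos.2 (hle t ht.le))
  intro t ht
  have hψt : ψ t ≤ c := by simpa [ψ, φ, A] using hanti Set.self_mem_Ici ht ht
  calc u t ≤ φ t := hle t ht
    _ = (φ t * exp (-A t)) * exp (A t) := by rw [mul_assoc, ← exp_add]; simp
    _ ≤ (c + ∫ s in (0 : ℝ)..t, f s) * exp (A t) := by
      gcongr
      linarith [hψt]

theorem integral_one_add_mul_pow {k : ℝ} (hk : k ≠ 0) (n : ℕ) (t : ℝ) :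
    ∫ s in (0 : ℝ)..t, (1 + k * s) ^ n = ((1 + k * t) ^ (n + 1) - 1) / (k * (n + 1)) := by
  have hn : (n : ℝ) + 1 ≠ 0 := by positivity
  rw [integral_comp_add_mul (fun x => x ^ n) hk, integral_pow]
  simp only [mul_zero, add_zero, one_pow, smul_eq_mul]
  field_simp

theorem le_mul_exp_of_le_add_integral_exp_mul_pow {u h : ℝ → ℝ} {c k K l : ℝ} {n : ℕ}
    (hu : Continuous u) (hh : Continuous h) (hh0 : ∀ t, 0 ≤ t → 0 ≤ h t) (hk : 0 ≤ k)
    (hl : l ≠ 0)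
    (hle : ∀ t, 0 ≤ t → u t ≤ c + (∫ s in (0 : ℝ)..t, k * h s * u s) +
      ∫ s in (0 : ℝ)..t, K * exp (k * ∫ r in (0 : ℝ)..s, h r) * (1 + l * s) ^ n) :
    ∀ t, 0 ≤ t → u t ≤ (c + K / (l * (n + 1)) * ((1 + l * t) ^ (n + 1) - 1)) *
      exp (k * ∫ s in (0 : ℝ)..t, h s) := by
  intro t ht
  have hf : Continuous fun s => K * (1 + l * s) ^ n := by fun_prop
  have := le_mul_exp_integral_of_le_add_integral (hh.const_mul k)
    (fun s hs => mul_nonneg hk (hh0 s hs)) hf hu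
    (fun τ hτ => by simpa only [integral_const_mul, mul_left_comm, mul_assoc] using hle τ hτ)
    t ht
  rwa [integral_const_mul, integral_one_add_mul_pow hl, integral_const_mul, mul_div_assoc',
    ← div_mul_eq_mul_div] at this

theorem growth_coeff_le {B C Q : ℝ} (n : ℕ) (hB : 0 < B) (hC : 0 < C) (hQ : 0 ≤ Q) :
    C * ((n + 3 : ℕ) : ℝ) * B ^ 2 * Q / (3 * C * B * (n + 1)) ≤ B * Q := by
  rw [div_le_iff₀ (by positivity)]
  push_cast
  nlinarith [mul_nonneg (by positivity : 0 ≤ C * B ^ 2 * Q) n.cast_nonneg]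

theorem stmt9_general (A B C C₀ C₁ : ℝ) (hA : 1 ≤ A) (hB : 0 < B) (hC : 0 < C)
    (hCC₀ : C ≤ C₀) (hC₁ : C₁ = 3 * C)
    (h : ℝ → ℝ) (hh : Continuous h) (hh0 : ∀ t, 0 ≤ h t)
    (E : ℕ → ℝ → ℝ)
    (hEcont : ∀ N, Continuous (E N))
    (hE2 : ∀ t, 0 ≤ t → E 2 t ≤ B)
    (hEinit : ∀ N, 2 ≤ N → E N 0 ≤ B * A ^ (N - 1))
    (hind : ∀ N, 3 ≤ N → ∀ t, 0 ≤ t →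
      E N t ≤ E N 0 + (∫ s in (0 : ℝ)..t, C₀ * ((N : ℝ) - 1) * h s * E N s) +
        ∫ s in (0 : ℝ)..t,
          C * (N : ℝ) * B ^ 2 * A ^ (N - 1) *
            Real.exp (C₀ * ((N : ℝ) - 1) * ∫ r in (0 : ℝ)..s, h r) *
            (1 + C₁ * B * s) ^ (N - 3)) :
    ∀ N, 2 ≤ N → ∀ t, 0 ≤ t →
      E N t ≤ 2 * B * A ^ (N - 1) *
        Real.exp (C₀ * ((N : ℝ) - 1) * ∫ s in (0 : ℝ)..t, h s) *
        (1 + C₁ * B * t) ^ (N - 2) := by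
  subst hC₁
  intro N hN t ht
  have hk : 0 ≤ C₀ * ((N : ℝ) - 1) :=
    mul_nonneg (hC.le.trans hCC₀) (by norm_num; exact_mod_cast (by omega : 1 ≤ N))
  have hexp : 1 ≤ exp (C₀ * ((N : ℝ) - 1) * ∫ s in (0 : ℝ)..t, h s) :=
    one_le_exp (mul_nonneg hk (integral_nonneg ht fun s _ => hh0 s))
  have hQ : 1 ≤ A ^ (N - 1) := one_le_pow₀ hA
  have hP : 1 ≤ (1 + 3 * C * B * t) ^ (N - 2) := one_le_pow₀ (by nlinarith [mul_pos hC hB])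
  obtain rfl | hN3 : N = 2 ∨ 3 ≤ N := by omega
  · calc E 2 t ≤ 2 * B * A ^ (2 - 1) * 1 * 1 := by nlinarith [hE2 t ht]
      _ ≤ _ := by gcongr
  · obtain ⟨n, rfl⟩ : ∃ n, N = n + 3 := ⟨N - 3, by omega⟩
    have hE := le_mul_exp_of_le_add_integral_exp_mul_pow (hEcont _) hh (fun s _ => hh0 s) hk
      (by positivity : 3 * C * B ≠ 0) (hind _ hN3) t ht
    rw [show n + 3 - 3 + 1 = n + 3 - 2 by omega, Nat.add_sub_cancel] at hE
    set Q := A ^ (n + 3 - 1)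
    set P := (1 + 3 * C * B * t) ^ (n + 3 - 2)
    set e := exp (C₀ * (((n + 3 : ℕ) : ℝ) - 1) * ∫ s in (0 : ℝ)..t, h s)
    calc E (n + 3) t ≤ _ := hE
      _ ≤ (B * Q + B * Q * (P - 1)) * e := by
        gcongr
        · exact hEinit _ hN
        · exact growth_coeff_le n hB hC (by positivity)
      _ ≤ 2 * B * Q * e * P := by
        nlinarith [mul_pos (mul_pos hB (by positivity : 0 < Q)) (exp_pos _ : 0 < e)]

/-- Abstract inductive energy estimate: under the recursive integral inequalities,
`E_N(t) ≤ 2 B A^{N-1} exp(C₀(N-1)H(t)) (1+C₁Bt)^{N-2}` for all `N ≥ 2`, `t ≥ 0`. -/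
theorem stmt9 (A B C C₀ C₁ : ℝ) (hA : 1 ≤ A) (hB : 0 < B) (hC : 0 < C)
    (hCC₀ : C ≤ C₀) (hC₁ : C₁ = 3 * C)
    (h : ℝ → ℝ) (hh : Continuous h) (hh0 : ∀ t, 0 ≤ h t)
    (E : ℕ → ℝ → ℝ)
    (hEcont : ∀ N, Continuous (E N))
    (hE0 : ∀ N t, 0 ≤ t → 0 ≤ E N t)
    (hE2 : ∀ t, 0 ≤ t → E 2 t ≤ B)
    (hEinit : ∀ N, 2 ≤ N → E N 0 ≤ B * A ^ (N - 1))
    (hind : ∀ N, 3 ≤ N → ∀ t, 0 ≤ t →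
      E N t ≤ E N 0 + (∫ s in (0 : ℝ)..t, C₀ * ((N : ℝ) - 1) * h s * E N s) +
        ∫ s in (0 : ℝ)..t,
          C * (N : ℝ) * B ^ 2 * A ^ (N - 1) *
            Real.exp (C₀ * ((N : ℝ) - 1) * ∫ r in (0 : ℝ)..s, h r) *
            (1 + C₁ * B * s) ^ (N - 3)) :
    ∀ N, 2 ≤ N → ∀ t, 0 ≤ t →
      E N t ≤ 2 * B * A ^ (N - 1) *
        Real.exp (C₀ * ((N : ℝ) - 1) * ∫ s in (0 : ℝ)..t, h s) *
        (1 + C₁ * B * t) ^ (N - 2) :=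
  stmt9_general A B C C₀ C₁ hA hB hC hCC₀ hC₁ h hh hh0 E hEcont hE2 hEinit hind
end

section
/- Suppose a smooth function u(t,·) on 𝕋^d satisfies, for all multi-indices α with |α| = N ≥ 2, ‖∂^α u(t)‖_{H^k} ≤ 2B A^{N−1} M_N exp(C₀(N−1)G(t)) (1 + C₁ B t)^{N−2}, with M_N = N!/(N+1)², A ≥ 1, B, C₀, C₁ > 0, and G(t) ≥ 0 nondecreasing. Then for each fixed t, u(t,·) is analytic with radius of analyticity at least A^{−1}(1 + C₁ B t)^{−1} exp(−C₀ G(t)). -/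
open MeasureTheory

/-- Partial derivative `∂_j f`. -/
noncomputable def pderiv' {d : ℕ} (j : Fin d) (f : (Fin d → ℝ) → ℝ) : (Fin d → ℝ) → ℝ :=
  fun x => fderiv ℝ f x (Pi.single j 1)

/-- Multi-index derivative `∂^α f`. -/
noncomputable def mderiv {d : ℕ} (α : Fin d → ℕ) (f : (Fin d → ℝ) → ℝ) : (Fin d → ℝ) → ℝ :=
  (List.finRange d).foldr (fun j g => (pderiv' j)^[α j] g) f

/-- `ℤ^d`-periodicity, modelling functions on the torus `𝕋^d`. -/
def TorusPeriodic {d : ℕ} (f : (Fin d → ℝ) → ℝ) : Prop :=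
  ∀ (x : Fin d → ℝ) (v : Fin d → ℤ), f (fun i => x i + (v i : ℝ)) = f x

/-- `L²` norm on the torus (integral over a fundamental domain). -/
noncomputable def L2Norm (d : ℕ) (f : (Fin d → ℝ) → ℝ) : ℝ :=
  Real.sqrt (∫ x in Set.Icc (0 : Fin d → ℝ) 1, (f x) ^ 2)

/-- `L²` inner product on the torus. -/
noncomputable def L2Inner (d : ℕ) (f g : (Fin d → ℝ) → ℝ) : ℝ :=
  ∫ x in Set.Icc (0 : Fin d → ℝ) 1, f x * g x

/-- `L^∞` norm. -/
noncomputable def LinfNorm (d : ℕ) (f : (Fin d → ℝ) → ℝ) : ℝ := ⨆ x, |f x|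

/-- Multi-indices of length `≤ k`. -/
noncomputable def multiIndices (d k : ℕ) : Finset (Fin d → ℕ) :=
  (Finset.Iic (fun _ => k : Fin d → ℕ)).filter (fun α => ∑ i, α i ≤ k)

/-- Sobolev `H^k` norm on the torus. -/
noncomputable def HkNorm (d k : ℕ) (f : (Fin d → ℝ) → ℝ) : ℝ :=
  Real.sqrt (∑ α ∈ multiIndices d k, (L2Norm d (mderiv α f)) ^ 2)

/-- If `‖∂^α u(t)‖_{H^k} ≤ 2B A^{N-1} M_N exp(C₀(N-1)G(t)) (1+C₁Bt)^{N-2}` for all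
`|α| = N ≥ 2`, then `u(t,·)` is analytic with radius of analyticity at least
`A⁻¹ (1+C₁Bt)⁻¹ exp(-C₀ G(t))`. -/
theorem stmt11 (d k : ℕ) (hk : (d : ℝ) / 2 + 1 < (k : ℝ))
    (A B C₀ C₁ : ℝ) (hA : 1 ≤ A) (hB : 0 < B) (hC₀ : 0 < C₀) (hC₁ : 0 < C₁)
    (G : ℝ → ℝ) (hG : ∀ t, 0 ≤ G t) (hGmono : Monotone G)
    (u : ℝ → (Fin d → ℝ) → ℝ) (hu : ∀ t, ContDiff ℝ (⊤ : ℕ∞) (u t))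
    (hup : ∀ t, TorusPeriodic (u t))
    (hbound : ∀ t : ℝ, 0 ≤ t → ∀ α : Fin d → ℕ, 2 ≤ ∑ i, α i →
      HkNorm d k (mderiv α (u t))
        ≤ 2 * B * A ^ ((∑ i, α i) - 1) * Mseq (∑ i, α i) *
            Real.exp (C₀ * ((∑ i, α i : ℕ) - 1 : ℝ) * G t) *
            (1 + C₁ * B * t) ^ ((∑ i, α i) - 2)) :
    ∀ t : ℝ, 0 ≤ t → ∀ ε : ℝ, 0 < ε →
      ε < A⁻¹ * (1 + C₁ * B * t)⁻¹ * Real.exp (-C₀ * G t) →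
      ∃ C : ℝ, 0 < C ∧ ∀ α : Fin d → ℕ,
        HkNorm d k (mderiv α (u t)) ≤ C * ε⁻¹ ^ (∑ i, α i) * ((∑ i, α i).factorial : ℝ) := by
  intro t ht ε hε hεlt
  have hP : (1:ℝ) ≤ 1 + C₁ * B * t := by nlinarith [mul_nonneg (mul_pos hC₁ hB).le ht]
  have hE : (1:ℝ) ≤ Real.exp (C₀ * G t) := Real.one_le_exp (mul_nonneg hC₀.le (hG t))
  set P : ℝ := 1 + C₁ * B * t with hPdef
  set E : ℝ := Real.exp (C₀ * G t) with hEdef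
  have hAP : (1:ℝ) ≤ A * P := by nlinarith
  have hr1 : (1:ℝ) ≤ A * P * E := by
    nlinarith [mul_le_mul hAP hE (by norm_num : (0:ℝ) ≤ 1) (by linarith : (0:ℝ) ≤ A * P)]
  have hr0 : (0:ℝ) < A * P * E := by linarith
  have hεr : ε < (A * P * E)⁻¹ := by
    rw [mul_inv, mul_inv, hEdef, ← Real.exp_neg, ← neg_mul]
    exact hεlt
  have hεinv : A * P * E ≤ ε⁻¹ := by
    have h2 : (A * P * E) * ε < 1 := by
      have := mul_lt_mul_of_pos_left hεr hr0
      rwa [mul_inv_cancel₀ hr0.ne'] at this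
    have h3 := mul_lt_mul_of_pos_right h2 (inv_pos.mpr hε)
    rw [mul_assoc, mul_inv_cancel₀ hε.ne', mul_one, one_mul] at h3
    linarith
  have hε1 : (1:ℝ) ≤ ε⁻¹ := by
    have hle : ε ≤ 1 := by
      have : (A * P * E)⁻¹ ≤ 1 := by
        rw [inv_le_one_iff₀]; right; exact hr1
      linarith
    nlinarith [mul_inv_cancel₀ hε.ne', inv_pos.mpr hε]
  set f : (Fin d → ℕ) → ℝ := fun α => HkNorm d k (mderiv α (u t)) with hf
  have hS0 : (0 : Fin d → ℕ) ∈ multiIndices d 1 := by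
    simp [multiIndices, Finset.mem_filter, Finset.mem_Iic, Pi.le_def]
  have hne : (multiIndices d 1).Nonempty := ⟨0, hS0⟩
  set Cm : ℝ := (multiIndices d 1).sup' hne f with hCm
  refine ⟨max (2 * B) (Cm + 1), lt_max_of_lt_left (by linarith), ?_⟩
  intro α
  set n : ℕ := ∑ i, α i with hn
  have hC0 : (0:ℝ) < max (2 * B) (Cm + 1) := lt_max_of_lt_left (by linarith)
  have hfac : (1:ℝ) ≤ (n.factorial : ℝ) := by
    exact_mod_cast Nat.one_le_iff_ne_zero.mpr n.factorial_ne_zero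
  have hεpow : (1:ℝ) ≤ ε⁻¹ ^ n := one_le_pow₀ hε1
  by_cases h2 : 2 ≤ n
  · have hb := hbound t ht α h2
    have hexp : Real.exp (C₀ * ((n : ℝ) - 1) * G t) = E ^ (n - 1) := by
      rw [hEdef, ← Real.exp_nat_mul]
      congr 1
      rw [Nat.cast_sub (by omega : 1 ≤ n)]
      ring
    have hMseq : Mseq n ≤ (n.factorial : ℝ) := by
      rw [Mseq]
      apply div_le_self (by positivity)
      nlinarith [Nat.cast_nonneg (α := ℝ) n]
    have key : 2 * B * A ^ (n - 1) * Mseq n * Real.exp (C₀ * ((n : ℝ) - 1) * G t)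
        * P ^ (n - 2) ≤ 2 * B * ε⁻¹ ^ n * (n.factorial : ℝ) := by
      rw [hexp]
      have step1 : 2 * B * A ^ (n - 1) * Mseq n * E ^ (n - 1) * P ^ (n - 2)
          ≤ 2 * B * A ^ n * (n.factorial : ℝ) * E ^ n * P ^ n := by
        have hM0 : 0 ≤ Mseq n := by
          rw [Mseq]; positivity
        gcongr <;> first | exact hMseq | omega | linarith
      have step2 : 2 * B * A ^ n * (n.factorial : ℝ) * E ^ n * P ^ n
          = 2 * B * (A * P * E) ^ n * (n.factorial : ℝ) := by
        rw [mul_pow, mul_pow]; ring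
      have step3 : 2 * B * (A * P * E) ^ n * (n.factorial : ℝ)
          ≤ 2 * B * ε⁻¹ ^ n * (n.factorial : ℝ) := by
        gcongr <;> linarith
      linarith
    calc f α ≤ _ := hb
      _ ≤ 2 * B * ε⁻¹ ^ n * (n.factorial : ℝ) := key
      _ ≤ max (2 * B) (Cm + 1) * ε⁻¹ ^ n * (n.factorial : ℝ) := by
          gcongr
          exact le_max_left _ _
  · have hmem : α ∈ multiIndices d 1 := by
      simp only [multiIndices, Finset.mem_filter, Finset.mem_Iic]
      constructor
      · intro i
        calc α i ≤ ∑ j, α j :=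
              Finset.single_le_sum (fun j _ => Nat.zero_le _) (Finset.mem_univ i)
          _ ≤ 1 := by omega
      · omega
    have h1 : f α ≤ Cm := Finset.le_sup' f hmem
    have h3 : (1:ℝ) ≤ ε⁻¹ ^ n * (n.factorial : ℝ) := one_le_mul_of_one_le_of_one_le hεpow hfac
    calc f α ≤ Cm + 1 := by linarith
      _ ≤ max (2 * B) (Cm + 1) := le_max_right _ _
      _ = max (2 * B) (Cm + 1) * 1 := (mul_one _).symm
      _ ≤ max (2 * B) (Cm + 1) * (ε⁻¹ ^ n * (n.factorial : ℝ)) := by gcongr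
      _ = max (2 * B) (Cm + 1) * ε⁻¹ ^ n * (n.factorial : ℝ) := by ring
end
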